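/- arXiv:1301.5497 — 6 statements merged into one kernel-verified Lean document; each statement's English description precedes it below -/
import Mathlib

section
/- Let E be a real vector space, θ : E → ℝ a superadditive and positively homogeneous function, ρ : E → ℝ any function, X, Z ∈ E, h > 0 and k ∈ ℝ. If θ(X) ≥ 0, ρ(X) > 0, ρ(X − h·Z) > 0, θ(Z)·ρ(X) ≥ θ(X)·k, and h·k ≥ ρ(X) − ρ(X − h·Z), then θ(X − h·Z)·ρ(X) ≤ θ(X)·ρ(X − h·Z), and consequently θ(X − h·Z)/ρ(X − h·Z) ≤ θ(X)/ρ(X). -/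
/-- Key inequality in the proof of the suitability theorem: if `θ` is
superadditive and positively homogeneous, `θ(X) ≥ 0`, `ρ(X) > 0`, `ρ(X − h·Z) > 0`,
`θ(Z)·ρ(X) ≥ θ(X)·k`, and `h·k ≥ ρ(X) − ρ(X − h·Z)`, then
`θ(X − h·Z)·ρ(X) ≤ θ(X)·ρ(X − h·Z)`, hence `θ(X − h·Z)/ρ(X − h·Z) ≤ θ(X)/ρ(X)`. -/
theorem key_suitability_inequality {E : Type*} [AddCommGroup E] [Module ℝ E]
    (θ ρ : E → ℝ)
    (hθ_superadd : ∀ X Y : E, θ X + θ Y ≤ θ (X + Y))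
    (hθ_poshom : ∀ (c : ℝ), 0 ≤ c → ∀ X : E, θ (c • X) = c * θ X)
    (X Z : E) (h k : ℝ) (hh : 0 < h)
    (hθX : 0 ≤ θ X) (hρX : 0 < ρ X) (hρXZ : 0 < ρ (X - h • Z))
    (hratio : θ X * k ≤ θ Z * ρ X)
    (hk : ρ X - ρ (X - h • Z) ≤ h * k) :
    θ (X - h • Z) * ρ X ≤ θ X * ρ (X - h • Z) ∧
    θ (X - h • Z) / ρ (X - h • Z) ≤ θ X / ρ X := by
  have h1 : θ (X - h • Z) + h * θ Z ≤ θ X := by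
    have := hθ_superadd (X - h • Z) (h • Z)
    rw [sub_add_cancel, hθ_poshom h hh.le] at this
    exact this
  have key : θ (X - h • Z) * ρ X ≤ θ X * ρ (X - h • Z) := by
    have h2 : θ (X - h • Z) * ρ X ≤ (θ X - h * θ Z) * ρ X :=
      mul_le_mul_of_nonneg_right (by linarith) hρX.le
    have h3 : h * (θ X * k) ≤ h * (θ Z * ρ X) := by
      exact mul_le_mul_of_nonneg_left hratio hh.le
    have h4 : θ X * (ρ X - ρ (X - h • Z)) ≤ θ X * (h * k) :=
      mul_le_mul_of_nonneg_left hk hθX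
    nlinarith
  refine ⟨key, ?_⟩
  rw [div_le_div_iff₀ hρXZ hρX]
  linarith
end

section
/- Let (Ω,ℱ,ℙ) be a probability space, p ∈ [1,∞], θ : L^p → ℝ ∪ {−∞} and ρ : L^p → ℝ ∪ {+∞} arbitrary maps, and let X ∈ 𝒳 with ρ(X) < ∞ and θ(X) > −∞, with decomposition X = X_1 + ⋯ + X_n. Suppose ρ satisfies assumption (A) at X for this decomposition, with constants ε_1,…,ε_n. If a pair (t,k) ∈ ℝ^n × ℝ^n satisfies, for every i ∈ {1,…,n} and every h ∈ (0,ε_i): h·t_i ≥ θ(X + h·X_i) − θ(X), h·t_i ≤ θ(X) − θ(X − h·X_i), h·k_i ≤ ρ(X + h·X_i) − ρ(X), and h·k_i ≥ ρ(X) − ρ(X − h·X_i), then (t,k) is a reward-risk allocation suitable for performance measurement with the reward-risk ratio α at X for this decomposition. -/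
open MeasureTheory
open scoped ENNReal

noncomputable def rewardRiskRatio {E : Type*} (θ ρ : E → EReal) (Y : E) : EReal :=
  if θ Y ≤ 0 ∧ 0 < ρ Y then 0
  else if 0 < θ Y ∧ ρ Y ≤ 0 then ⊤
  else θ Y / ρ Y

def AssumptionA {E : Type*} [AddCommGroup E] [Module ℝ E] (ρ : E → EReal) (X : E)
    {n : ℕ} (Xs : Fin n → E) (ε : Fin n → ℝ) : Prop :=
  ∀ i : Fin n, 0 < ε i ∧ ∀ h : ℝ, 0 < h → h < ε i →
    ((0 < ρ X → 0 < ρ (X - h • Xs i) ∧ 0 < ρ (X + h • Xs i)) ∧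
     (ρ X < 0 → ρ (X - h • Xs i) < 0 ∧ ρ (X + h • Xs i) < 0))

/-- A pair `(t, k) ∈ ℝⁿ × ℝⁿ` is a reward-risk allocation suitable for performance
measurement with `α` at `X` for the decomposition `X = ∑ i, Xs i`. The ratio
conditions `tᵢ/kᵢ ≷ θ(X)/ρ(X)` are read as cross-multiplied inequalities in `EReal`. -/
def SuitableRewardRiskPM {E : Type*} [AddCommGroup E] [Module ℝ E] (θ ρ : E → EReal)
    (X : E) {n : ℕ} (Xs : Fin n → E) (t k : Fin n → ℝ) : Prop :=
  (0 < θ X → ∀ i : Fin n, ∃ ε > (0 : ℝ), ∀ h : ℝ, 0 < h → h < ε →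
    (θ X * (k i : EReal) < (t i : EReal) * ρ X →
      rewardRiskRatio θ ρ (X - h • Xs i) < rewardRiskRatio θ ρ X) ∧
    ((t i : EReal) * ρ X < θ X * (k i : EReal) →
      rewardRiskRatio θ ρ (X + h • Xs i) < rewardRiskRatio θ ρ X)) ∧
  (θ X < 0 → ∀ i : Fin n, ∃ ε > (0 : ℝ), ∀ h : ℝ, 0 < h → h < ε →
    (θ X * (k i : EReal) < (t i : EReal) * ρ X →
      rewardRiskRatio θ ρ X < rewardRiskRatio θ ρ (X + h • Xs i)) ∧
    ((t i : EReal) * ρ X < θ X * (k i : EReal) →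
      rewardRiskRatio θ ρ X < rewardRiskRatio θ ρ (X - h • Xs i)))

/- ### Auxiliary EReal arithmetic lemmas -/

private lemma ereal_sub_le (x : EReal) (a r : ℝ) (h : x - (a : EReal) ≤ (r : EReal)) :
    x ≤ ((a + r : ℝ) : EReal) := by
  induction x using EReal.rec with
  | bot => exact bot_le
  | coe y =>
    rw [← EReal.coe_sub, EReal.coe_le_coe_iff] at h
    exact EReal.coe_le_coe_iff.2 (by linarith)
  | top =>
    rw [EReal.top_sub_coe, top_le_iff] at h
    exact absurd h (EReal.coe_ne_top r)

private lemma ereal_le_sub (x : EReal) (a r : ℝ) (h : (r : EReal) ≤ x - (a : EReal)) :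
    ((a + r : ℝ) : EReal) ≤ x := by
  induction x using EReal.rec with
  | bot =>
    rw [EReal.bot_sub, le_bot_iff] at h
    exact absurd h (EReal.coe_ne_bot r)
  | coe y =>
    rw [← EReal.coe_sub, EReal.coe_le_coe_iff] at h
    exact EReal.coe_le_coe_iff.2 (by linarith)
  | top => exact le_top

private lemma ereal_le_sub' (x : EReal) (a r : ℝ) (h : (r : EReal) ≤ (a : EReal) - x) :
    x ≤ ((a - r : ℝ) : EReal) := by
  induction x using EReal.rec with
  | bot => exact bot_le
  | coe y =>
    rw [← EReal.coe_sub, EReal.coe_le_coe_iff] at h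
    exact EReal.coe_le_coe_iff.2 (by linarith)
  | top =>
    rw [EReal.sub_top, le_bot_iff] at h
    exact absurd h (EReal.coe_ne_bot r)

private lemma ereal_sub_le' (x : EReal) (a r : ℝ) (h : (a : EReal) - x ≤ (r : EReal)) :
    ((a - r : ℝ) : EReal) ≤ x := by
  induction x using EReal.rec with
  | bot =>
    rw [EReal.coe_sub_bot, top_le_iff] at h
    exact absurd h (EReal.coe_ne_top r)
  | coe y =>
    rw [← EReal.coe_sub, EReal.coe_le_coe_iff] at h
    exact EReal.coe_le_coe_iff.2 (by linarith)
  | top => exact le_top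

/-- Value of the reward-risk ratio at a point with finite reward and risk of the same sign. -/
private lemma ratio_eq_coe_div {E : Type*} (θ ρ : E → EReal) (X : E) (a b : ℝ)
    (hθ : θ X = (a : EReal)) (hρ : ρ X = (b : EReal))
    (hab : (0 < a ∧ 0 < b) ∨ (a < 0 ∧ b < 0)) :
    rewardRiskRatio θ ρ X = ((a / b : ℝ) : EReal) := by
  unfold rewardRiskRatio
  rw [hθ, hρ, ← EReal.coe_div]
  rcases hab with ⟨ha, hb⟩ | ⟨ha, hb⟩
  · rw [if_neg, if_neg]
    · rintro ⟨-, h2⟩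
      exact absurd (EReal.coe_pos.2 hb) (not_lt.2 h2)
    · rintro ⟨h1, -⟩
      exact absurd (EReal.coe_pos.2 ha) (not_lt.2 h1)
  · rw [if_neg, if_neg]
    · rintro ⟨h1, -⟩
      exact absurd (EReal.coe_neg'.2 ha) (not_lt.2 h1.le)
    · rintro ⟨-, h2⟩
      exact absurd (EReal.coe_neg'.2 hb) (not_lt.2 h2.le)

/-- Key comparison in the positive case. -/
private lemma aux_pos {E : Type*} (θ ρ : E → EReal) (Y : E) (a b c d : ℝ)
    (ha : 0 < a) (hb : 0 < b)
    (hθY : θ Y ≤ (c : EReal)) (hρY : (d : EReal) ≤ ρ Y)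
    (hρpos : 0 < ρ Y) (hθtop : θ Y ≠ ⊤)
    (hcb : c * b < a * d) :
    rewardRiskRatio θ ρ Y < ((a / b : ℝ) : EReal) := by
  have hab : (0 : ℝ) < a / b := div_pos ha hb
  unfold rewardRiskRatio
  by_cases h1 : θ Y ≤ 0
  · rw [if_pos ⟨h1, hρpos⟩]
    exact_mod_cast EReal.coe_pos.2 hab
  · push_neg at h1
    rw [if_neg (fun hh => h1.not_ge hh.1), if_neg (fun hh => hρpos.not_ge hh.2)]
    have hθbot : θ Y ≠ ⊥ := fun hB => by simp [hB] at h1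
    have hYeq : θ Y = ((θ Y).toReal : EReal) := (EReal.coe_toReal hθtop hθbot).symm
    set y := (θ Y).toReal with hy
    have hy0 : 0 < y := EReal.coe_pos.1 (hYeq ▸ h1)
    have hyc : y ≤ c := EReal.coe_le_coe_iff.1 (hYeq ▸ hθY)
    rcases eq_or_ne (ρ Y) ⊤ with hT | hT
    · rw [hT, EReal.div_top]
      exact_mod_cast EReal.coe_pos.2 hab
    · have hρbot : ρ Y ≠ ⊥ := fun hB => by simp [hB] at hρpos
      have hZeq : ρ Y = ((ρ Y).toReal : EReal) := (EReal.coe_toReal hT hρbot).symm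
      set z := (ρ Y).toReal with hz
      have hz0 : 0 < z := EReal.coe_pos.1 (hZeq ▸ hρpos)
      have hdz : d ≤ z := EReal.coe_le_coe_iff.1 (hZeq ▸ hρY)
      rw [hYeq, hZeq, ← EReal.coe_div]
      refine EReal.coe_lt_coe_iff.2 ?_
      rw [div_lt_div_iff₀ hz0 hb]
      nlinarith

/-- Key comparison in the negative case. -/
private lemma aux_neg {E : Type*} (θ ρ : E → EReal) (Y : E) (a b c d : ℝ)
    (ha : a < 0) (hb : b < 0)
    (hθY : θ Y ≤ (c : EReal)) (hρY : (d : EReal) ≤ ρ Y)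
    (hρneg : ρ Y < 0) (hρbot : ρ Y ≠ ⊥) (hθtop : θ Y ≠ ⊤)
    (hcb : a * d < c * b) :
    ((a / b : ℝ) : EReal) < rewardRiskRatio θ ρ Y := by
  unfold rewardRiskRatio
  rw [if_neg (fun hh => hρneg.not_gt hh.2)]
  by_cases h2 : 0 < θ Y
  · rw [if_pos ⟨h2, hρneg.le⟩]
    exact EReal.coe_lt_top _
  · rw [if_neg (fun hh => h2 hh.1)]
    push_neg at h2
    have hρtop : ρ Y ≠ ⊤ := fun hT => by simp [hT] at hρneg
    have hZeq : ρ Y = ((ρ Y).toReal : EReal) := (EReal.coe_toReal hρtop hρbot).symm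
    set z := (ρ Y).toReal with hz
    have hz0 : z < 0 := EReal.coe_neg'.1 (hZeq ▸ hρneg)
    have hdz : d ≤ z := EReal.coe_le_coe_iff.1 (hZeq ▸ hρY)
    rcases eq_or_ne (θ Y) ⊥ with hB | hB
    · rw [hB, hZeq, EReal.bot_div_of_neg_ne_bot (EReal.coe_neg'.2 hz0) (EReal.coe_ne_bot z)]
      exact EReal.coe_lt_top _
    · have hYeq : θ Y = ((θ Y).toReal : EReal) := (EReal.coe_toReal hθtop hB).symm
      set y := (θ Y).toReal with hy
      have hyc : y ≤ c := EReal.coe_le_coe_iff.1 (hYeq ▸ hθY)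
      rw [hYeq, hZeq, ← EReal.coe_div]
      refine EReal.coe_lt_coe_iff.2 ?_
      have key : a / b = -a / -b := by rw [neg_div_neg_eq]
      have key' : y / z = -y / -z := by rw [neg_div_neg_eq]
      rw [key, key', div_lt_div_iff₀ (by linarith) (by linarith)]
      nlinarith

/-- Let `θ : L^p → ℝ ∪ {−∞}` and `ρ : L^p → ℝ ∪ {+∞}` be arbitrary
maps, let `X ∈ 𝒳` (so `θ(X)` and `ρ(X)` are nonzero with the same sign) with
`ρ(X) < ∞`, `θ(X) > −∞`, and decomposition `X = ∑ i, Xs i`, and suppose `ρ`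
satisfies assumption (A) at `X` with constants `ε i`. Any `(t, k)` satisfying the
four one-sided bounds for all `h ∈ (0, ε i)` is a reward-risk allocation suitable
for performance measurement with `α` at `X` for this decomposition. -/
theorem suitability_of_reward_risk_allocations
    {Ω : Type*} [MeasurableSpace Ω] (μ : Measure Ω) [IsProbabilityMeasure μ]
    (p : ℝ≥0∞) [Fact (1 ≤ p)]
    (θ : Lp ℝ p μ → EReal) (ρ : Lp ℝ p μ → EReal)
    (hθ_ne_top : ∀ Y, θ Y ≠ ⊤) (hρ_ne_bot : ∀ Y, ρ Y ≠ ⊥)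
    (𝒳 : Set (Lp ℝ p μ))
    (h𝒳 : ∀ Y ∈ 𝒳, (0 < θ Y ∧ 0 < ρ Y) ∨ (θ Y < 0 ∧ ρ Y < 0))
    {n : ℕ} (X : Lp ℝ p μ) (hX𝒳 : X ∈ 𝒳) (Xs : Fin n → Lp ℝ p μ)
    (hdecomp : X = ∑ i, Xs i)
    (hX_dom : ρ X ≠ ⊤) (hX_dom' : θ X ≠ ⊥)
    (ε : Fin n → ℝ) (hA : AssumptionA ρ X Xs ε)
    (t k : Fin n → ℝ)
    (htk : ∀ i : Fin n, ∀ h : ℝ, 0 < h → h < ε i →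
      θ (X + h • Xs i) - θ X ≤ ((h * t i : ℝ) : EReal) ∧
      ((h * t i : ℝ) : EReal) ≤ θ X - θ (X - h • Xs i) ∧
      ((h * k i : ℝ) : EReal) ≤ ρ (X + h • Xs i) - ρ X ∧
      ρ X - ρ (X - h • Xs i) ≤ ((h * k i : ℝ) : EReal)) :
    SuitableRewardRiskPM θ ρ X Xs t k := by
  -- finite real values of θ X and ρ X
  have hθeq : θ X = ((θ X).toReal : EReal) := (EReal.coe_toReal (hθ_ne_top X) hX_dom').symm
  have hρeq : ρ X = ((ρ X).toReal : EReal) :=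
    (EReal.coe_toReal hX_dom (hρ_ne_bot X)).symm
  set a := (θ X).toReal with ha_def
  set b := (ρ X).toReal with hb_def
  constructor
  · -- positive case
    intro hθpos i
    have hρpos : 0 < ρ X := by
      rcases h𝒳 X hX𝒳 with ⟨-, h⟩ | ⟨h, -⟩
      · exact h
      · exact absurd hθpos h.not_gt
    have ha : 0 < a := EReal.coe_pos.1 (hθeq ▸ hθpos)
    have hb : 0 < b := EReal.coe_pos.1 (hρeq ▸ hρpos)
    refine ⟨ε i, (hA i).1, fun h hh0 hhε => ?_⟩
    obtain ⟨B1, B2, B3, B4⟩ := htk i h hh0 hhε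
    rw [hθeq] at B1 B2
    rw [hρeq] at B3 B4
    have bound1 : θ (X + h • Xs i) ≤ ((a + h * t i : ℝ) : EReal) :=
      ereal_sub_le _ a (h * t i) B1
    have bound2 : θ (X - h • Xs i) ≤ ((a - h * t i : ℝ) : EReal) :=
      ereal_le_sub' _ a (h * t i) B2
    have bound3 : ((b + h * k i : ℝ) : EReal) ≤ ρ (X + h • Xs i) :=
      ereal_le_sub _ b (h * k i) B3
    have bound4 : ((b - h * k i : ℝ) : EReal) ≤ ρ (X - h • Xs i) :=
      ereal_sub_le' _ b (h * k i) B4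
    obtain ⟨hAm, hAp⟩ := ((hA i).2 h hh0 hhε).1 hρpos
    have hval : rewardRiskRatio θ ρ X = ((a / b : ℝ) : EReal) :=
      ratio_eq_coe_div θ ρ X a b hθeq hρeq (Or.inl ⟨ha, hb⟩)
    rw [hval]
    constructor
    · intro hcond
      rw [hθeq, hρeq, ← EReal.coe_mul, ← EReal.coe_mul] at hcond
      have hc : a * k i < t i * b := EReal.coe_lt_coe_iff.1 hcond
      exact aux_pos θ ρ _ a b (a - h * t i) (b - h * k i) ha hb bound2 bound4 hAm
        (hθ_ne_top _) (by nlinarith)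
    · intro hcond
      rw [hθeq, hρeq, ← EReal.coe_mul, ← EReal.coe_mul] at hcond
      have hc : t i * b < a * k i := EReal.coe_lt_coe_iff.1 hcond
      exact aux_pos θ ρ _ a b (a + h * t i) (b + h * k i) ha hb bound1 bound3 hAp
        (hθ_ne_top _) (by nlinarith)
  · -- negative case
    intro hθneg i
    have hρneg : ρ X < 0 := by
      rcases h𝒳 X hX𝒳 with ⟨h, -⟩ | ⟨-, h⟩
      · exact absurd hθneg h.not_gt
      · exact h
    have ha : a < 0 := EReal.coe_neg'.1 (hθeq ▸ hθneg)
    have hb : b < 0 := EReal.coe_neg'.1 (hρeq ▸ hρneg)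
    refine ⟨ε i, (hA i).1, fun h hh0 hhε => ?_⟩
    obtain ⟨B1, B2, B3, B4⟩ := htk i h hh0 hhε
    rw [hθeq] at B1 B2
    rw [hρeq] at B3 B4
    have bound1 : θ (X + h • Xs i) ≤ ((a + h * t i : ℝ) : EReal) :=
      ereal_sub_le _ a (h * t i) B1
    have bound2 : θ (X - h • Xs i) ≤ ((a - h * t i : ℝ) : EReal) :=
      ereal_le_sub' _ a (h * t i) B2
    have bound3 : ((b + h * k i : ℝ) : EReal) ≤ ρ (X + h • Xs i) :=
      ereal_le_sub _ b (h * k i) B3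
    have bound4 : ((b - h * k i : ℝ) : EReal) ≤ ρ (X - h • Xs i) :=
      ereal_sub_le' _ b (h * k i) B4
    obtain ⟨hAm, hAp⟩ := ((hA i).2 h hh0 hhε).2 hρneg
    have hval : rewardRiskRatio θ ρ X = ((a / b : ℝ) : EReal) :=
      ratio_eq_coe_div θ ρ X a b hθeq hρeq (Or.inr ⟨ha, hb⟩)
    rw [hval]
    constructor
    · intro hcond
      rw [hθeq, hρeq, ← EReal.coe_mul, ← EReal.coe_mul] at hcond
      have hc : a * k i < t i * b := EReal.coe_lt_coe_iff.1 hcond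
      exact aux_neg θ ρ _ a b (a + h * t i) (b + h * k i) ha hb bound1 bound3 hAp
        (hρ_ne_bot _) (hθ_ne_top _) (by nlinarith)
    · intro hcond
      rw [hθeq, hρeq, ← EReal.coe_mul, ← EReal.coe_mul] at hcond
      have hc : t i * b < a * k i := EReal.coe_lt_coe_iff.1 hcond
      exact aux_neg θ ρ _ a b (a - h * t i) (b - h * k i) ha hb bound2 bound4 hAm
        (hρ_ne_bot _) (hθ_ne_top _) (by nlinarith)
end

section
/- Let (Ω,ℱ,ℙ) be a probability space, p ∈ [1,∞], θ : L^p → ℝ ∪ {−∞} a concave reward measure, and ρ : L^p → ℝ ∪ {+∞} a convex risk measure. Let X = X_1 + ⋯ + X_n belong to 𝒳 with ρ(X) < ∞ and θ(X) > −∞. Suppose ρ satisfies assumption (A) at X for this decomposition and that the superdifferential ∂θ(X) and the subdifferential ∂ρ(X) are nonempty. Then for every ψ ∈ ∂θ(X) and every ξ ∈ ∂ρ(X), the reward-risk capital allocation (t,k) ∈ ℝ^n × ℝ^n defined by t_i = E[ψ·X_i] and k_i = E[ξ·X_i] is suitable for performance measurement with the reward-risk ratio α at X for this decomposition. -/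
open MeasureTheory
open scoped ENNReal

open MeasureTheory

lemma ereal_coe_div (a b : ℝ) : ((a / b : ℝ) : EReal) = (a : EReal) / (b : EReal) := by
  rw [div_eq_mul_inv, EReal.coe_mul, EReal.coe_inv, div_eq_mul_inv]

lemma posCase (θ' ρ' : EReal) (hθ't : θ' ≠ ⊤) (T R c d : ℝ) (hT : 0 < T) (hR : 0 < R)
    (hρ' : 0 < ρ') (h1 : θ' ≤ ((T + c : ℝ) : EReal)) (h2 : ((R + d : ℝ) : EReal) ≤ ρ')
    (hRd : 0 < R + d) (hcross : c * R < T * d) :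
    (if θ' ≤ 0 ∧ 0 < ρ' then (0 : EReal) else if 0 < θ' ∧ ρ' ≤ 0 then ⊤ else θ' / ρ') <
      ((T / R : ℝ) : EReal) := by
  have hTR : (0 : EReal) < ((T / R : ℝ) : EReal) := by
    exact_mod_cast EReal.coe_pos.mpr (div_pos hT hR)
  by_cases hθ0 : θ' ≤ 0
  · rw [if_pos ⟨hθ0, hρ'⟩]; exact hTR
  · push_neg at hθ0
    rw [if_neg (fun hc => LT.lt.not_ge hθ0 hc.1), if_neg (fun hc => LT.lt.not_ge hρ' hc.2)]
    have hθb : θ' ≠ ⊥ := fun hc => by simp [hc] at hθ0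
    set a := θ'.toReal with ha
    have hθ'eq : θ' = (a : EReal) := (EReal.coe_toReal hθ't hθb).symm
    have ha0 : 0 < a := EReal.coe_pos.mp (hθ'eq ▸ hθ0)
    have hac : a ≤ T + c := EReal.coe_le_coe_iff.mp (hθ'eq ▸ h1)
    by_cases hρt : ρ' = ⊤
    · rw [hρt, hθ'eq]
      rw [div_eq_mul_inv, EReal.inv_top, mul_zero]
      exact hTR
    · have hρb : ρ' ≠ ⊥ := fun hc => by simp [hc] at h2
      
      set b := ρ'.toReal with hb
      have hρ'eq : ρ' = (b : EReal) := (EReal.coe_toReal hρt hρb).symm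
      have hbR : R + d ≤ b := EReal.coe_le_coe_iff.mp (hρ'eq ▸ h2)
      have hb0 : 0 < b := lt_of_lt_of_le hRd hbR
      rw [hθ'eq, hρ'eq, ← ereal_coe_div, EReal.coe_lt_coe_iff]
      rw [div_lt_div_iff₀ hb0 hR]
      nlinarith [mul_le_mul_of_nonneg_right hac hR.le, mul_le_mul_of_nonneg_left hbR hT.le]

lemma negCase (θ' ρ' : EReal) (T R c d : ℝ) (hT : T < 0) (hR : R < 0)
    (hρ' : ρ' < 0) (h1 : θ' ≤ ((T + c : ℝ) : EReal)) (h2 : ((R + d : ℝ) : EReal) ≤ ρ')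
    (hTc : T + c < 0) (hcross : T * d < c * R) :
    ((T / R : ℝ) : EReal) <
      (if θ' ≤ 0 ∧ 0 < ρ' then (0 : EReal) else if 0 < θ' ∧ ρ' ≤ 0 then ⊤ else θ' / ρ') := by
  have hρb : ρ' ≠ ⊥ := fun hc => by simp [hc] at h2
  have hρt : ρ' ≠ ⊤ := ne_of_lt (lt_trans hρ' (by norm_num))
  set b := ρ'.toReal with hb
  have hρ'eq : ρ' = (b : EReal) := (EReal.coe_toReal hρt hρb).symm
  have hb0 : b < 0 := EReal.coe_neg'.mp (hρ'eq ▸ hρ')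
  have hbR : R + d ≤ b := EReal.coe_le_coe_iff.mp (hρ'eq ▸ h2)
  have hθ0 : θ' ≤ 0 := le_trans h1 (by exact_mod_cast EReal.coe_nonpos.mpr hTc.le)
  rw [if_neg (fun hc => LT.lt.not_gt hρ' hc.2), if_neg (fun hc => hθ0.not_gt hc.1)]
  by_cases hθb : θ' = ⊥
  · rw [hθb, hρ'eq,
      show (⊥ : EReal) / (b : EReal) = ⊥ * ((b : EReal))⁻¹ from div_eq_mul_inv _ _,
      ← EReal.coe_inv, EReal.bot_mul_of_neg (EReal.coe_neg'.mpr (inv_neg''.mpr hb0))]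
    exact EReal.coe_lt_top _
  · have hθt : θ' ≠ ⊤ := ne_of_lt (lt_of_le_of_lt h1 (EReal.coe_lt_top _))
    set a := θ'.toReal with ha
    have hθ'eq : θ' = (a : EReal) := (EReal.coe_toReal hθt hθb).symm
    have hac : a ≤ T + c := EReal.coe_le_coe_iff.mp (hθ'eq ▸ h1)
    rw [hθ'eq, hρ'eq, ← ereal_coe_div, EReal.coe_lt_coe_iff]
    have e1 : T / R = (-T) / (-R) := by rw [neg_div_neg_eq]
    have e2 : a / b = (-a) / (-b) := by rw [neg_div_neg_eq]
    rw [e1, e2, div_lt_div_iff₀ (by linarith) (by linarith)]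
    nlinarith [mul_le_mul_of_nonpos_right hac hR.le, mul_le_mul_of_nonpos_left hbR hT.le]

set_option maxHeartbeats 1000000 in
/-- Let `θ` be a concave reward measure and `ρ` a convex risk measure,
`X = ∑ i, Xs i ∈ 𝒳` with `ρ(X) < ∞` and `θ(X) > −∞`, and suppose `ρ` satisfies
assumption (A) at `X`. For every `ψ` in the superdifferential `∂θ(X)` and every `ξ`
in the subdifferential `∂ρ(X)`, the reward-risk allocation `t i = E[ψ · Xs i]`,
`k i = E[ξ · Xs i]` is suitable for performance measurement with `α` at `X`. -/
theorem sub_and_superdifferential_allocation_suitable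
    {Ω : Type*} [MeasurableSpace Ω] (μ : Measure Ω) [IsProbabilityMeasure μ]
    (p q : ℝ≥0∞) [Fact (1 ≤ p)] (hpq : p⁻¹ + q⁻¹ = 1)
    (θ : Lp ℝ p μ → EReal) (ρ : Lp ℝ p μ → EReal)
    -- θ is a concave reward measure, taking values in ℝ ∪ {−∞}
    (hθ_ne_top : ∀ Y, θ Y ≠ ⊤)
    (hθ_mono : ∀ Y Z : Lp ℝ p μ, (∀ᵐ ω ∂μ, Z ω ≤ Y ω) → θ Z ≤ θ Y)
    (hθ_trans : ∀ (Y : Lp ℝ p μ) (m : ℝ), θ (Y + Lp.const p μ m) = θ Y + (m : EReal))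
    (hθ_conc : ∀ (Y Z : Lp ℝ p μ) (a : ℝ), 0 < a → a < 1 →
      (a : EReal) * θ Y + ((1 - a : ℝ) : EReal) * θ Z ≤ θ (a • Y + (1 - a) • Z))
    -- ρ is a convex risk measure, taking values in ℝ ∪ {+∞}
    (hρ_ne_bot : ∀ Y, ρ Y ≠ ⊥)
    (hρ_mono : ∀ Y Z : Lp ℝ p μ, (∀ᵐ ω ∂μ, Z ω ≤ Y ω) → ρ Y ≤ ρ Z)
    (hρ_trans : ∀ (Y : Lp ℝ p μ) (m : ℝ), ρ (Y + Lp.const p μ m) = ρ Y - (m : EReal))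
    (hρ_conv : ∀ (Y Z : Lp ℝ p μ) (a : ℝ), 0 < a → a < 1 →
      ρ (a • Y + (1 - a) • Z) ≤ (a : EReal) * ρ Y + ((1 - a : ℝ) : EReal) * ρ Z)
    (𝒳 : Set (Lp ℝ p μ))
    (h𝒳 : ∀ Y ∈ 𝒳, (0 < θ Y ∧ 0 < ρ Y) ∨ (θ Y < 0 ∧ ρ Y < 0))
    {n : ℕ} (X : Lp ℝ p μ) (hX𝒳 : X ∈ 𝒳) (Xs : Fin n → Lp ℝ p μ)
    (hdecomp : X = ∑ i, Xs i)
    (hX_dom : ρ X ≠ ⊤) (hX_dom' : θ X ≠ ⊥)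
    (ε : Fin n → ℝ) (hA : AssumptionA ρ X Xs ε)
    -- ψ is an element of the superdifferential ∂θ(X) ⊆ L^q
    (ψ : Lp ℝ q μ)
    (hψ : ∀ Y : Lp ℝ p μ, θ (X + Y) ≤ θ X + ((∫ ω, ψ ω * Y ω ∂μ : ℝ) : EReal))
    -- ξ is an element of the subdifferential ∂ρ(X) ⊆ L^q
    (ξ : Lp ℝ q μ)
    (hξ : ∀ Y : Lp ℝ p μ, ρ X + ((∫ ω, ξ ω * Y ω ∂μ : ℝ) : EReal) ≤ ρ (X + Y)) :
    SuitableRewardRiskPM θ ρ X Xs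
      (fun i => ∫ ω, ψ ω * Xs i ω ∂μ) (fun i => ∫ ω, ξ ω * Xs i ω ∂μ) := by
  classical
  -- notation
  set t : Fin n → ℝ := fun i => ∫ ω, ψ ω * Xs i ω ∂μ with ht
  set k : Fin n → ℝ := fun i => ∫ ω, ξ ω * Xs i ω ∂μ with hk
  -- linearity of the pairing
  have key_int : ∀ (φ : Lp ℝ q μ) (s : ℝ) (i : Fin n),
      (∫ ω, φ ω * ((s • Xs i : Lp ℝ p μ) : Ω → ℝ) ω ∂μ) = s * ∫ ω, φ ω * Xs i ω ∂μ := by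
    intro φ s i
    have hc : ((s • Xs i : Lp ℝ p μ) : Ω → ℝ) =ᵐ[μ] fun ω => s * Xs i ω := Lp.coeFn_smul s (Xs i)
    calc (∫ ω, φ ω * ((s • Xs i : Lp ℝ p μ) : Ω → ℝ) ω ∂μ)
        = ∫ ω, s * (φ ω * Xs i ω) ∂μ := by
          refine integral_congr_ae (hc.mono fun ω hω => ?_)
          simp only [hω]; ring
      _ = s * ∫ ω, φ ω * Xs i ω ∂μ := integral_const_mul s _
  have hsub : ∀ (s : ℝ) (i : Fin n), X - s • Xs i = X + (-s) • Xs i := by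
    intro s i; rw [neg_smul, ← sub_eq_add_neg]
  -- real values of θ X and ρ X
  set T : ℝ := (θ X).toReal with hTdef
  set R : ℝ := (ρ X).toReal with hRdef
  have hTθ : θ X = (T : EReal) := (EReal.coe_toReal (hθ_ne_top X) hX_dom').symm
  have hRρ : ρ X = (R : EReal) := (EReal.coe_toReal hX_dom (hρ_ne_bot X)).symm
  -- bounds from the sub/superdifferentials
  have hθbound : ∀ (s : ℝ) (i : Fin n), θ (X + s • Xs i) ≤ ((T + s * t i : ℝ) : EReal) := by
    intro s i
    have := hψ (s • Xs i)
    rwa [key_int ψ s i, hTθ, ← EReal.coe_add] at this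
  have hρbound : ∀ (s : ℝ) (i : Fin n), ((R + s * k i : ℝ) : EReal) ≤ ρ (X + s • Xs i) := by
    intro s i
    have := hξ (s • Xs i)
    rwa [key_int ξ s i, hRρ, ← EReal.coe_add] at this
  constructor
  · -- case θ X > 0
    intro hθpos i
    have hρpos : 0 < ρ X := by
      rcases h𝒳 X hX𝒳 with ⟨_, h⟩ | ⟨h, _⟩
      · exact h
      · exact absurd hθpos (LT.lt.not_gt h)
    have hT0 : 0 < T := EReal.coe_pos.mp (hTθ ▸ hθpos)
    have hR0 : 0 < R := EReal.coe_pos.mp (hRρ ▸ hρpos)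
    have hαX : rewardRiskRatio θ ρ X = ((T / R : ℝ) : EReal) := by
      rw [rewardRiskRatio, if_neg (fun hc => LT.lt.not_ge hθpos hc.1),
        if_neg (fun hc => LT.lt.not_ge hρpos hc.2), hTθ, hRρ, ereal_coe_div]
    obtain ⟨hεi, hAi⟩ := hA i
    refine ⟨min (ε i) (R / (|k i| + 1)), lt_min hεi (div_pos hR0 (by positivity)), ?_⟩
    intro h hh0 hhε
    have hhεi : h < ε i := lt_of_lt_of_le hhε (min_le_left _ _)
    have hhk : h * |k i| < R := by
      have h1 : h < R / (|k i| + 1) := lt_of_lt_of_le hhε (min_le_right _ _)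
      have h2 : h * (|k i| + 1) < R := (lt_div_iff₀ (by positivity)).mp h1
      nlinarith [abs_nonneg (k i)]
    have habs1 : 0 < R - h * k i := by
      nlinarith [le_abs_self (k i), neg_abs_le (k i)]
    have habs2 : 0 < R + h * k i := by
      nlinarith [le_abs_self (k i), neg_abs_le (k i)]
    have hAih := hAi h hh0 hhεi
    constructor
    · intro hlt
      rw [hTθ, hRρ, ← EReal.coe_mul, ← EReal.coe_mul, EReal.coe_lt_coe_iff] at hlt
      rw [hαX, rewardRiskRatio]
      have hθ' := hθbound (-h) i
      have hρ' := hρbound (-h) i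
      rw [← hsub h i] at hθ' hρ'
      refine posCase _ _ (hθ_ne_top _) T R (-h * t i) (-h * k i) hT0 hR0
        ((hAih.1 hρpos).1) hθ' hρ' (by nlinarith) (by nlinarith)
    · intro hlt
      rw [hTθ, hRρ, ← EReal.coe_mul, ← EReal.coe_mul, EReal.coe_lt_coe_iff] at hlt
      rw [hαX, rewardRiskRatio]
      exact posCase _ _ (hθ_ne_top _) T R (h * t i) (h * k i) hT0 hR0
        ((hAih.1 hρpos).2) (hθbound h i) (hρbound h i) (by nlinarith) (by nlinarith)
  · -- case θ X < 0
    intro hθneg i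
    have hρneg : ρ X < 0 := by
      rcases h𝒳 X hX𝒳 with ⟨h, _⟩ | ⟨_, h⟩
      · exact absurd h (LT.lt.not_gt hθneg)
      · exact h
    have hT0 : T < 0 := EReal.coe_neg'.mp (hTθ ▸ hθneg)
    have hR0 : R < 0 := EReal.coe_neg'.mp (hRρ ▸ hρneg)
    have hαX : rewardRiskRatio θ ρ X = ((T / R : ℝ) : EReal) := by
      rw [rewardRiskRatio, if_neg (fun hc => LT.lt.not_gt hρneg hc.2),
        if_neg (fun hc => LT.lt.not_gt hθneg hc.1), hTθ, hRρ, ereal_coe_div]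
    obtain ⟨hεi, hAi⟩ := hA i
    refine ⟨min (ε i) (min ((-T) / (|t i| + 1)) ((-R) / (|k i| + 1))),
      lt_min hεi (lt_min (div_pos (by linarith) (by positivity))
        (div_pos (by linarith) (by positivity))), ?_⟩
    intro h hh0 hhε
    have hhεi : h < ε i := lt_of_lt_of_le hhε (min_le_left _ _)
    have hht : h * |t i| < -T := by
      have h1 : h < (-T) / (|t i| + 1) :=
        lt_of_lt_of_le hhε (le_trans (min_le_right _ _) (min_le_left _ _))
      have h2 : h * (|t i| + 1) < -T := (lt_div_iff₀ (by positivity)).mp h1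
      nlinarith [abs_nonneg (t i)]
    have hhk : h * |k i| < -R := by
      have h1 : h < (-R) / (|k i| + 1) :=
        lt_of_lt_of_le hhε (le_trans (min_le_right _ _) (min_le_right _ _))
      have h2 : h * (|k i| + 1) < -R := (lt_div_iff₀ (by positivity)).mp h1
      nlinarith [abs_nonneg (k i)]
    have ht1 : T + h * t i < 0 := by nlinarith [le_abs_self (t i), neg_abs_le (t i)]
    have ht2 : T + -h * t i < 0 := by nlinarith [le_abs_self (t i), neg_abs_le (t i)]
    have hAih := hAi h hh0 hhεi
    constructor
    · intro hlt
      rw [hTθ, hRρ, ← EReal.coe_mul, ← EReal.coe_mul, EReal.coe_lt_coe_iff] at hlt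
      rw [hαX, rewardRiskRatio]
      exact negCase _ _ T R (h * t i) (h * k i) hT0 hR0
        ((hAih.2 hρneg).2) (hθbound h i) (hρbound h i) ht1 (by nlinarith)
    · intro hlt
      rw [hTθ, hRρ, ← EReal.coe_mul, ← EReal.coe_mul, EReal.coe_lt_coe_iff] at hlt
      rw [hαX, rewardRiskRatio]
      have hθ' := hθbound (-h) i
      have hρ' := hρbound (-h) i
      rw [← hsub h i] at hθ' hρ'
      exact negCase _ _ T R (-h * t i) (-h * k i) hT0 hR0
        ((hAih.2 hρneg).1) hθ' hρ' ht2 (by nlinarith)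
end

section
/- Let (Ω,ℱ,ℙ) be a probability space, p ∈ [1,∞], θ : L^p → ℝ ∪ {−∞} a concave reward measure, and ρ : L^p → ℝ ∪ {+∞} a convex risk measure, both Gâteaux-differentiable at the aggregate position X = X_1 + ⋯ + X_n ∈ 𝒳. Then the limits t_i = lim_{h→0} (θ(X + h·X_i) − θ(X))/h and k_i = lim_{h→0} (ρ(X + h·X_i) − ρ(X))/h exist for each i, and the resulting reward-risk capital allocation (t,k) is suitable for performance measurement with the reward-risk ratio α at X for this decomposition. -/
open MeasureTheory Filter
open scoped ENNReal Topology

/-- If `z / h` is finite for a nonzero real `h`, then `z` is finite. -/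
lemma aux_ne_top_bot {z : EReal} {h : ℝ} (hh : h ≠ 0)
    (h1 : z / (h : EReal) ≠ ⊤) (h2 : z / (h : EReal) ≠ ⊥) : z ≠ ⊤ ∧ z ≠ ⊥ := by
  constructor
  · rintro rfl
    rcases hh.lt_or_gt with hneg | hpos
    · exact h2 (EReal.top_div_of_neg_ne_bot (EReal.coe_neg'.mpr hneg) (EReal.coe_ne_bot h))
    · exact h1 (EReal.top_div_of_pos_ne_top (EReal.coe_pos.mpr hpos) (EReal.coe_ne_top h))
  · rintro rfl
    rcases hh.lt_or_gt with hneg | hpos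
    · exact h1 (EReal.bot_div_of_neg_ne_bot (EReal.coe_neg'.mpr hneg) (EReal.coe_ne_bot h))
    · exact h2 (EReal.bot_div_of_pos_ne_top (EReal.coe_pos.mpr hpos) (EReal.coe_ne_top h))

/-- If the difference quotients of `f` at `x` converge to a real number, then `x` is finite. -/
lemma aux_base_finite {f : ℝ → EReal} {x : EReal} {c : ℝ}
    (H : Tendsto (fun h : ℝ => (f h - x) / (h : EReal)) (𝓝[≠] (0 : ℝ)) (𝓝 (c : EReal))) :
    x ≠ ⊤ ∧ x ≠ ⊥ := by
  have h1 : ∀ᶠ h in 𝓝[≠] (0 : ℝ), (f h - x) / (h : EReal) ≠ ⊤ :=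
    H.eventually_ne (EReal.coe_ne_top c)
  have h2 : ∀ᶠ h in 𝓝[≠] (0 : ℝ), (f h - x) / (h : EReal) ≠ ⊥ :=
    H.eventually_ne (EReal.coe_ne_bot c)
  have hmono : 𝓝[Set.Ioi (0 : ℝ)] 0 ≤ 𝓝[≠] (0 : ℝ) :=
    nhdsWithin_mono _ (fun y hy => ne_of_gt hy)
  have h3 : ∀ᶠ h in 𝓝[Set.Ioi (0 : ℝ)] 0, 0 < h := eventually_mem_nhdsWithin
  obtain ⟨h0, ⟨hQt, hQb⟩, hpos⟩ := (((h1.and h2).filter_mono hmono).and h3).exists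
  constructor
  · rintro rfl
    rw [EReal.sub_top] at hQb
    exact hQb (EReal.bot_div_of_pos_ne_top (EReal.coe_pos.mpr hpos) (EReal.coe_ne_top h0))
  · rintro rfl
    by_cases hf : f h0 = ⊥
    · rw [hf, EReal.bot_sub] at hQb
      exact hQb (EReal.bot_div_of_pos_ne_top (EReal.coe_pos.mpr hpos) (EReal.coe_ne_top h0))
    · rw [EReal.sub_bot hf] at hQt
      exact hQt (EReal.top_div_of_pos_ne_top (EReal.coe_pos.mpr hpos) (EReal.coe_ne_top h0))

/-- Extraction of real expansions from the Gâteaux limit. -/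
lemma aux_extract {f : ℝ → EReal} {x : EReal} {c : ℝ}
    (hx1 : x ≠ ⊤) (hx2 : x ≠ ⊥)
    (H : Tendsto (fun h : ℝ => (f h - x) / (h : EReal)) (𝓝[≠] (0 : ℝ)) (𝓝 (c : EReal))) :
    Tendsto (fun h : ℝ => ((f h - x) / (h : EReal)).toReal) (𝓝[≠] (0 : ℝ)) (𝓝 c) ∧
    ∀ᶠ h in 𝓝[≠] (0 : ℝ),
      f h = ((x.toReal + h * ((f h - x) / (h : EReal)).toReal : ℝ) : EReal) := by
  constructor
  · have := (EReal.tendsto_toReal (EReal.coe_ne_top c) (EReal.coe_ne_bot c)).comp H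
    exact this
  · have h1 : ∀ᶠ h in 𝓝[≠] (0 : ℝ), (f h - x) / (h : EReal) ≠ ⊤ :=
      H.eventually_ne (EReal.coe_ne_top c)
    have h2 : ∀ᶠ h in 𝓝[≠] (0 : ℝ), (f h - x) / (h : EReal) ≠ ⊥ :=
      H.eventually_ne (EReal.coe_ne_bot c)
    have h3 : ∀ᶠ h in 𝓝[≠] (0 : ℝ), h ≠ 0 := eventually_mem_nhdsWithin
    filter_upwards [h1, h2, h3] with h hQt hQb hh0
    obtain ⟨hz1, hz2⟩ := aux_ne_top_bot hh0 hQt hQb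
    set zt := (f h - x).toReal with hzt
    have hfx : f h - x = (zt : EReal) := (EReal.coe_toReal hz1 hz2).symm
    have hQ : (f h - x) / (h : EReal) = ((zt / h : ℝ) : EReal) := by
      rw [hfx]; exact (EReal.coe_div _ _)
    have hxc : x = (x.toReal : EReal) := (EReal.coe_toReal hx1 hx2).symm
    have hmul : h * (zt / h) = zt := by field_simp
    have key : f h = ((x.toReal + zt : ℝ) : EReal) := by
      calc f h = f h - (x.toReal : EReal) + (x.toReal : EReal) :=
            EReal.sub_add_cancel.symm
        _ = (zt : EReal) + (x.toReal : EReal) := by rw [← hxc, hfx]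
        _ = ((zt + x.toReal : ℝ) : EReal) := by rw [EReal.coe_add]
        _ = ((x.toReal + zt : ℝ) : EReal) := by rw [add_comm]
    rw [hQ, EReal.toReal_coe, hmul, key]

/-- `rewardRiskRatio` as a real quotient when both values are finite of the same sign. -/
lemma aux_rrr {E : Type*} (θ ρ : E → EReal) (Z : E) {a b : ℝ}
    (hθ : θ Z = (a : EReal)) (hρ : ρ Z = (b : EReal))
    (hab : (0 < a ∧ 0 < b) ∨ (a < 0 ∧ b < 0)) :
    rewardRiskRatio θ ρ Z = ((a / b : ℝ) : EReal) := by
  simp only [rewardRiskRatio, hθ, hρ]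
  rcases hab with ⟨ha, hb⟩ | ⟨ha, hb⟩
  · rw [if_neg (fun hc => absurd hc.1 (not_le.mpr (EReal.coe_pos.mpr ha))),
      if_neg (fun hc => absurd hc.2 (not_le.mpr (EReal.coe_pos.mpr hb)))]
    exact (EReal.coe_div a b).symm
  · rw [if_neg (fun hc => absurd hc.2 (not_lt.mpr (le_of_lt (EReal.coe_neg'.mpr hb)))),
      if_neg (fun hc => absurd hc.1 (not_lt.mpr (le_of_lt (EReal.coe_neg'.mpr ha))))]
    exact (EReal.coe_div a b).symm

lemma aux_div_lt_pos {T R T' R' : ℝ} (hR : 0 < R) (hR' : 0 < R') (h : T' * R < T * R') :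
    T' / R' < T / R := (div_lt_div_iff₀ hR' hR).mpr h

lemma aux_div_lt_neg {T R T' R' : ℝ} (hR : R < 0) (hR' : R' < 0) (h : T * R' < T' * R) :
    T / R < T' / R' := by
  rw [← neg_div_neg_eq T R, ← neg_div_neg_eq T' R']
  exact (div_lt_div_iff₀ (by linarith) (by linarith)).mpr (by nlinarith)

/-- Let `θ` be a concave reward measure and `ρ` a convex risk
measure, both Gâteaux-differentiable at `X = ∑ i, Xs i ∈ 𝒳`. Then the limits
`t i = lim_{h→0} (θ(X + h·Xs i) − θ(X))/h` and
`k i = lim_{h→0} (ρ(X + h·Xs i) − ρ(X))/h` exist and the resulting reward-risk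
allocation `(t, k)` is suitable for performance measurement with `α` at `X`. -/
theorem gradient_reward_risk_allocation_exists_and_suitable
    {Ω : Type*} [MeasurableSpace Ω] (μ : Measure Ω) [IsProbabilityMeasure μ]
    (p q : ℝ≥0∞) [Fact (1 ≤ p)] (hpq : p⁻¹ + q⁻¹ = 1)
    (θ : Lp ℝ p μ → EReal) (ρ : Lp ℝ p μ → EReal)
    (hθ_ne_top : ∀ Y, θ Y ≠ ⊤)
    (hθ_mono : ∀ Y Z : Lp ℝ p μ, (∀ᵐ ω ∂μ, Z ω ≤ Y ω) → θ Z ≤ θ Y)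
    (hθ_trans : ∀ (Y : Lp ℝ p μ) (m : ℝ), θ (Y + Lp.const p μ m) = θ Y + (m : EReal))
    (hθ_conc : ∀ (Y Z : Lp ℝ p μ) (a : ℝ), 0 < a → a < 1 →
      (a : EReal) * θ Y + ((1 - a : ℝ) : EReal) * θ Z ≤ θ (a • Y + (1 - a) • Z))
    (hρ_ne_bot : ∀ Y, ρ Y ≠ ⊥)
    (hρ_mono : ∀ Y Z : Lp ℝ p μ, (∀ᵐ ω ∂μ, Z ω ≤ Y ω) → ρ Y ≤ ρ Z)
    (hρ_trans : ∀ (Y : Lp ℝ p μ) (m : ℝ), ρ (Y + Lp.const p μ m) = ρ Y - (m : EReal))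
    (hρ_conv : ∀ (Y Z : Lp ℝ p μ) (a : ℝ), 0 < a → a < 1 →
      ρ (a • Y + (1 - a) • Z) ≤ (a : EReal) * ρ Y + ((1 - a : ℝ) : EReal) * ρ Z)
    (𝒳 : Set (Lp ℝ p μ))
    (h𝒳 : ∀ Y ∈ 𝒳, (0 < θ Y ∧ 0 < ρ Y) ∨ (θ Y < 0 ∧ ρ Y < 0))
    {n : ℕ} (X : Lp ℝ p μ) (hX𝒳 : X ∈ 𝒳) (Xs : Fin n → Lp ℝ p μ)
    (hdecomp : X = ∑ i, Xs i)
    -- θ is Gâteaux-differentiable at X, with Gâteaux derivative ψ ∈ L^q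
    (hGateauxθ : ∃ ψ : Lp ℝ q μ, ∀ Y : Lp ℝ p μ,
      Tendsto (fun h : ℝ => (θ (X + h • Y) - θ X) / (h : EReal)) (𝓝[≠] (0 : ℝ))
        (𝓝 ((∫ ω, ψ ω * Y ω ∂μ : ℝ) : EReal)))
    -- ρ is Gâteaux-differentiable at X, with Gâteaux derivative ξ ∈ L^q
    (hGateauxρ : ∃ ξ : Lp ℝ q μ, ∀ Y : Lp ℝ p μ,
      Tendsto (fun h : ℝ => (ρ (X + h • Y) - ρ X) / (h : EReal)) (𝓝[≠] (0 : ℝ))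
        (𝓝 ((∫ ω, ξ ω * Y ω ∂μ : ℝ) : EReal))) :
    ∃ t k : Fin n → ℝ,
      (∀ i : Fin n,
        Tendsto (fun h : ℝ => (θ (X + h • Xs i) - θ X) / (h : EReal)) (𝓝[≠] (0 : ℝ))
          (𝓝 ((t i : ℝ) : EReal))) ∧
      (∀ i : Fin n,
        Tendsto (fun h : ℝ => (ρ (X + h • Xs i) - ρ X) / (h : EReal)) (𝓝[≠] (0 : ℝ))
          (𝓝 ((k i : ℝ) : EReal))) ∧
      SuitableRewardRiskPM θ ρ X Xs t k := by
  obtain ⟨ψ, hψ⟩ := hGateauxθ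
  obtain ⟨ξ, hξ⟩ := hGateauxρ
  refine ⟨fun i => ∫ ω, ψ ω * (Xs i) ω ∂μ, fun i => ∫ ω, ξ ω * (Xs i) ω ∂μ,
    fun i => hψ (Xs i), fun i => hξ (Xs i), ?_⟩
  -- the key quantitative expansion
  have key : ∀ i : Fin n, ∃ ε > (0 : ℝ), ∀ h : ℝ, h ≠ 0 → |h| < ε →
      ∃ a b : ℝ,
        θ (X + h • Xs i) = (((θ X).toReal + h * a : ℝ) : EReal) ∧
        ρ (X + h • Xs i) = (((ρ X).toReal + h * b : ℝ) : EReal) ∧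
        |h * a| < |(θ X).toReal| ∧ |h * b| < |(ρ X).toReal| ∧
        ((θ X).toReal * (∫ ω, ξ ω * (Xs i) ω ∂μ) <
            (∫ ω, ψ ω * (Xs i) ω ∂μ) * (ρ X).toReal →
          (θ X).toReal * b < a * (ρ X).toReal) ∧
        ((∫ ω, ψ ω * (Xs i) ω ∂μ) * (ρ X).toReal <
            (θ X).toReal * (∫ ω, ξ ω * (Xs i) ω ∂μ) →
          a * (ρ X).toReal < (θ X).toReal * b) := by
    intro i
    obtain ⟨hθt, hθb⟩ := aux_base_finite (hψ (Xs i))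
    obtain ⟨hρt, hρb⟩ := aux_base_finite (hξ (Xs i))
    have hTc : θ X = ((θ X).toReal : EReal) := (EReal.coe_toReal hθt hθb).symm
    have hRc : ρ X = ((ρ X).toReal : EReal) := (EReal.coe_toReal hρt hρb).symm
    have hTRne : (θ X).toReal ≠ 0 ∧ (ρ X).toReal ≠ 0 := by
      rcases h𝒳 X hX𝒳 with ⟨h1, h2⟩ | ⟨h1, h2⟩
      · rw [hTc] at h1; rw [hRc] at h2
        exact ⟨ne_of_gt (EReal.coe_pos.mp h1), ne_of_gt (EReal.coe_pos.mp h2)⟩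
      · rw [hTc] at h1; rw [hRc] at h2
        exact ⟨ne_of_lt (EReal.coe_neg'.mp h1), ne_of_lt (EReal.coe_neg'.mp h2)⟩
    obtain ⟨haθ, heθ⟩ := aux_extract hθt hθb (hψ (Xs i))
    obtain ⟨haρ, heρ⟩ := aux_extract hρt hρb (hξ (Xs i))
    set A : ℝ → ℝ := fun h => ((θ (X + h • Xs i) - θ X) / (h : EReal)).toReal with hA
    set B : ℝ → ℝ := fun h => ((ρ (X + h • Xs i) - ρ X) / (h : EReal)).toReal with hB
    set t0 : ℝ := ∫ ω, ψ ω * (Xs i) ω ∂μ with ht0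
    set k0 : ℝ := ∫ ω, ξ ω * (Xs i) ω ∂μ with hk0
    have hid : Tendsto (fun h : ℝ => h) (𝓝[≠] (0 : ℝ)) (𝓝 0) :=
      tendsto_id.mono_left nhdsWithin_le_nhds
    have hmulA : Tendsto (fun h => h * A h) (𝓝[≠] (0 : ℝ)) (𝓝 0) := by
      simpa using hid.mul haθ
    have hmulB : Tendsto (fun h => h * B h) (𝓝[≠] (0 : ℝ)) (𝓝 0) := by
      simpa using hid.mul haρ
    have hEa : ∀ᶠ h in 𝓝[≠] (0 : ℝ), |h * A h| < |(θ X).toReal| := by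
      have h1 : Tendsto (fun h => |h * A h|) (𝓝[≠] (0 : ℝ)) (𝓝 0) := by
        simpa using hmulA.abs
      exact h1.eventually_lt_const (abs_pos.mpr hTRne.1)
    have hEb : ∀ᶠ h in 𝓝[≠] (0 : ℝ), |h * B h| < |(ρ X).toReal| := by
      have h1 : Tendsto (fun h => |h * B h|) (𝓝[≠] (0 : ℝ)) (𝓝 0) := by
        simpa using hmulB.abs
      exact h1.eventually_lt_const (abs_pos.mpr hTRne.2)
    have hcross : Tendsto (fun h => A h * (ρ X).toReal - (θ X).toReal * B h)
        (𝓝[≠] (0 : ℝ)) (𝓝 (t0 * (ρ X).toReal - (θ X).toReal * k0)) :=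
      (haθ.mul_const _).sub (haρ.const_mul _)
    have hE1 : ∀ᶠ h in 𝓝[≠] (0 : ℝ),
        ((θ X).toReal * k0 < t0 * (ρ X).toReal → (θ X).toReal * B h < A h * (ρ X).toReal) := by
      by_cases hc : (θ X).toReal * k0 < t0 * (ρ X).toReal
      · have h0 : (0 : ℝ) < t0 * (ρ X).toReal - (θ X).toReal * k0 := sub_pos.mpr hc
        exact (hcross.eventually_const_lt h0).mono fun h hh _ => by linarith
      · exact Eventually.of_forall fun h hc' => absurd hc' hc
    have hE2 : ∀ᶠ h in 𝓝[≠] (0 : ℝ),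
        (t0 * (ρ X).toReal < (θ X).toReal * k0 → A h * (ρ X).toReal < (θ X).toReal * B h) := by
      by_cases hc : t0 * (ρ X).toReal < (θ X).toReal * k0
      · have h0 : t0 * (ρ X).toReal - (θ X).toReal * k0 < 0 := sub_neg.mpr hc
        exact (hcross.eventually_lt_const h0).mono fun h hh _ => by linarith
      · exact Eventually.of_forall fun h hc' => absurd hc' hc
    have hall := heθ.and (heρ.and (hEa.and (hEb.and (hE1.and hE2))))
    rw [eventually_nhdsWithin_iff, Metric.eventually_nhds_iff] at hall
    obtain ⟨ε, hε, hP⟩ := hall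
    refine ⟨ε, hε, fun h hh0 hhε => ?_⟩
    have hmem : h ∈ ({(0 : ℝ)}ᶜ : Set ℝ) := hh0
    have hdist : dist h 0 < ε := by simpa [Real.dist_eq] using hhε
    obtain ⟨e1, e2, e3, e4, e5, e6⟩ := hP hdist hmem
    exact ⟨A h, B h, e1, e2, e3, e4, e5, e6⟩
  constructor
  · -- case θ X > 0
    intro hθpos i
    obtain ⟨hθt, hθb⟩ := aux_base_finite (hψ (Xs i))
    obtain ⟨hρt, hρb⟩ := aux_base_finite (hξ (Xs i))
    have hTc : θ X = ((θ X).toReal : EReal) := (EReal.coe_toReal hθt hθb).symm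
    have hRc : ρ X = ((ρ X).toReal : EReal) := (EReal.coe_toReal hρt hρb).symm
    have hρpos : 0 < ρ X := by
      rcases h𝒳 X hX𝒳 with ⟨_, h2⟩ | ⟨h1, _⟩
      · exact h2
      · exact absurd hθpos h1.asymm
    have hT : 0 < (θ X).toReal := EReal.coe_pos.mp (by rw [← hTc]; exact hθpos)
    have hR : 0 < (ρ X).toReal := EReal.coe_pos.mp (by rw [← hRc]; exact hρpos)
    obtain ⟨ε, hε, hkey⟩ := key i
    have hαX : rewardRiskRatio θ ρ X = (((θ X).toReal / (ρ X).toReal : ℝ) : EReal) :=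
      aux_rrr θ ρ X hTc hRc (Or.inl ⟨hT, hR⟩)
    refine ⟨ε, hε, fun h hh hhε => ⟨fun hc1 => ?_, fun hc2 => ?_⟩⟩
    · have hc1' : (θ X).toReal * (∫ ω, ξ ω * (Xs i) ω ∂μ) <
          (∫ ω, ψ ω * (Xs i) ω ∂μ) * (ρ X).toReal := by
        rw [hTc, hRc, ← EReal.coe_mul, ← EReal.coe_mul] at hc1
        exact EReal.coe_lt_coe_iff.mp hc1
      obtain ⟨a, b, ha, hb, habs1, habs2, hcr1, _⟩ :=
        hkey (-h) (neg_ne_zero.mpr (ne_of_gt hh)) (by rwa [abs_neg, abs_of_pos hh])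
      have hXsub : X - h • Xs i = X + (-h) • Xs i := by rw [neg_smul, ← sub_eq_add_neg]
      have habs1' : |(-h) * a| < (θ X).toReal := by rwa [abs_of_pos hT] at habs1
      have habs2' : |(-h) * b| < (ρ X).toReal := by rwa [abs_of_pos hR] at habs2
      have hθ' : 0 < (θ X).toReal + (-h) * a := by linarith [(abs_lt.mp habs1').1]
      have hρ' : 0 < (ρ X).toReal + (-h) * b := by linarith [(abs_lt.mp habs2').1]
      rw [hXsub, hαX, aux_rrr θ ρ _ ha hb (Or.inl ⟨hθ', hρ'⟩), EReal.coe_lt_coe_iff]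
      apply aux_div_lt_pos hR hρ'
      nlinarith [mul_pos hh (sub_pos.mpr (hcr1 hc1'))]
    · have hc2' : (∫ ω, ψ ω * (Xs i) ω ∂μ) * (ρ X).toReal <
          (θ X).toReal * (∫ ω, ξ ω * (Xs i) ω ∂μ) := by
        rw [hTc, hRc, ← EReal.coe_mul, ← EReal.coe_mul] at hc2
        exact EReal.coe_lt_coe_iff.mp hc2
      obtain ⟨a, b, ha, hb, habs1, habs2, _, hcr2⟩ :=
        hkey h (ne_of_gt hh) (by rwa [abs_of_pos hh])
      have habs1' : |h * a| < (θ X).toReal := by rwa [abs_of_pos hT] at habs1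
      have habs2' : |h * b| < (ρ X).toReal := by rwa [abs_of_pos hR] at habs2
      have hθ' : 0 < (θ X).toReal + h * a := by linarith [(abs_lt.mp habs1').1]
      have hρ' : 0 < (ρ X).toReal + h * b := by linarith [(abs_lt.mp habs2').1]
      rw [hαX, aux_rrr θ ρ _ ha hb (Or.inl ⟨hθ', hρ'⟩), EReal.coe_lt_coe_iff]
      apply aux_div_lt_pos hR hρ'
      nlinarith [mul_pos hh (sub_pos.mpr (hcr2 hc2'))]
  · -- case θ X < 0
    intro hθneg i
    obtain ⟨hθt, hθb⟩ := aux_base_finite (hψ (Xs i))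
    obtain ⟨hρt, hρb⟩ := aux_base_finite (hξ (Xs i))
    have hTc : θ X = ((θ X).toReal : EReal) := (EReal.coe_toReal hθt hθb).symm
    have hRc : ρ X = ((ρ X).toReal : EReal) := (EReal.coe_toReal hρt hρb).symm
    have hρneg : ρ X < 0 := by
      rcases h𝒳 X hX𝒳 with ⟨h1, _⟩ | ⟨_, h2⟩
      · exact absurd h1 hθneg.asymm
      · exact h2
    have hT : (θ X).toReal < 0 := EReal.coe_neg'.mp (by rw [← hTc]; exact hθneg)
    have hR : (ρ X).toReal < 0 := EReal.coe_neg'.mp (by rw [← hRc]; exact hρneg)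
    obtain ⟨ε, hε, hkey⟩ := key i
    have hαX : rewardRiskRatio θ ρ X = (((θ X).toReal / (ρ X).toReal : ℝ) : EReal) :=
      aux_rrr θ ρ X hTc hRc (Or.inr ⟨hT, hR⟩)
    refine ⟨ε, hε, fun h hh hhε => ⟨fun hc1 => ?_, fun hc2 => ?_⟩⟩
    · have hc1' : (θ X).toReal * (∫ ω, ξ ω * (Xs i) ω ∂μ) <
          (∫ ω, ψ ω * (Xs i) ω ∂μ) * (ρ X).toReal := by
        rw [hTc, hRc, ← EReal.coe_mul, ← EReal.coe_mul] at hc1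
        exact EReal.coe_lt_coe_iff.mp hc1
      obtain ⟨a, b, ha, hb, habs1, habs2, hcr1, _⟩ :=
        hkey h (ne_of_gt hh) (by rwa [abs_of_pos hh])
      have habs1' : |h * a| < -(θ X).toReal := by rwa [abs_of_neg hT] at habs1
      have habs2' : |h * b| < -(ρ X).toReal := by rwa [abs_of_neg hR] at habs2
      have hθ' : (θ X).toReal + h * a < 0 := by linarith [(abs_lt.mp habs1').2]
      have hρ' : (ρ X).toReal + h * b < 0 := by linarith [(abs_lt.mp habs2').2]
      rw [hαX, aux_rrr θ ρ _ ha hb (Or.inr ⟨hθ', hρ'⟩), EReal.coe_lt_coe_iff]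
      apply aux_div_lt_neg hR hρ'
      nlinarith [mul_pos hh (sub_pos.mpr (hcr1 hc1'))]
    · have hc2' : (∫ ω, ψ ω * (Xs i) ω ∂μ) * (ρ X).toReal <
          (θ X).toReal * (∫ ω, ξ ω * (Xs i) ω ∂μ) := by
        rw [hTc, hRc, ← EReal.coe_mul, ← EReal.coe_mul] at hc2
        exact EReal.coe_lt_coe_iff.mp hc2
      obtain ⟨a, b, ha, hb, habs1, habs2, _, hcr2⟩ :=
        hkey (-h) (neg_ne_zero.mpr (ne_of_gt hh)) (by rwa [abs_neg, abs_of_pos hh])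
      have hXsub : X - h • Xs i = X + (-h) • Xs i := by rw [neg_smul, ← sub_eq_add_neg]
      have habs1' : |(-h) * a| < -(θ X).toReal := by rwa [abs_of_neg hT] at habs1
      have habs2' : |(-h) * b| < -(ρ X).toReal := by rwa [abs_of_neg hR] at habs2
      have hθ' : (θ X).toReal + (-h) * a < 0 := by linarith [(abs_lt.mp habs1').2]
      have hρ' : (ρ X).toReal + (-h) * b < 0 := by linarith [(abs_lt.mp habs2').2]
      rw [hXsub, hαX, aux_rrr θ ρ _ ha hb (Or.inr ⟨hθ', hρ'⟩), EReal.coe_lt_coe_iff]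
      apply aux_div_lt_neg hR hρ'
      nlinarith [mul_pos hh (sub_pos.mpr (hcr2 hc2'))]
end

section
/- Let ∅ ≠ U ⊆ ℝ^n be an open set and θ_X, ρ_X : U → ℝ functions such that for every u ∈ U either θ_X(u) > 0 and ρ_X(u) > 0, or θ_X(u) < 0 and ρ_X(u) < 0, and such that θ_X and ρ_X are partially differentiable at u ∈ U with continuous partial derivatives. Then the gradient reward-risk allocation (t,k) defined by t_i(u) = ∂θ_X(u)/∂u_i and k_i(u) = ∂ρ_X(u)/∂u_i (i = 1,…,n) is suitable for performance measurement with α_X at u. -/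
/-- The `i`-th standard unit vector of `ℝⁿ`. -/
def unitVec {n : ℕ} (i : Fin n) : Fin n → ℝ := Pi.single i 1

/-- A pair of allocation vectors `(t, k)` is suitable for performance measurement with
the ratio `α_X = θ_X / ρ_X` at the portfolio `u ∈ U`: the cross-multiplied ratio
conditions force strict local monotonicity of `α_X` along each coordinate direction
`e i`, for all small `s > 0` with `u ± s • e i ∈ U`. -/
def SuitableGradientPM {n : ℕ} (θX ρX : (Fin n → ℝ) → ℝ) (U : Set (Fin n → ℝ))
    (u : Fin n → ℝ) (t k : Fin n → ℝ) : Prop :=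
  ∀ i : Fin n,
    (θX u * k i < t i * ρX u →
      ∃ ε > (0 : ℝ), ∀ s : ℝ, 0 < s → s < ε →
        u + s • unitVec i ∈ U → u - s • unitVec i ∈ U →
          θX (u + s • unitVec i) / ρX (u + s • unitVec i) > θX u / ρX u ∧
          θX u / ρX u > θX (u - s • unitVec i) / ρX (u - s • unitVec i)) ∧
    (t i * ρX u < θX u * k i →
      ∃ ε > (0 : ℝ), ∀ s : ℝ, 0 < s → s < ε →
        u + s • unitVec i ∈ U → u - s • unitVec i ∈ U →
          θX (u - s • unitVec i) / ρX (u - s • unitVec i) > θX u / ρX u ∧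
          θX u / ρX u > θX (u + s • unitVec i) / ρX (u + s • unitVec i))

lemma aux_mono {n : ℕ} (U : Set (Fin n → ℝ)) (hU_open : IsOpen U)
    (θX ρX : (Fin n → ℝ) → ℝ)
    (hρ_ne : ∀ v ∈ U, ρX v ≠ 0)
    (u : Fin n → ℝ) (hu : u ∈ U) (i : Fin n)
    (Dθ Dρ : (Fin n → ℝ) → Fin n → ℝ)
    (hθ_pd : ∀ v ∈ U, HasDerivAt (fun s : ℝ => θX (v + s • unitVec i)) (Dθ v i) 0)
    (hρ_pd : ∀ v ∈ U, HasDerivAt (fun s : ℝ => ρX (v + s • unitVec i)) (Dρ v i) 0)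
    (hθ_cont : ContinuousWithinAt (fun v => Dθ v i) U u)
    (hρ_cont : ContinuousWithinAt (fun v => Dρ v i) U u)
    (hlt : θX u * Dρ u i < Dθ u i * ρX u) :
    ∃ ε > (0 : ℝ), ∀ s : ℝ, 0 < s → s < ε →
        θX (u + s • unitVec i) / ρX (u + s • unitVec i) > θX u / ρX u ∧
        θX u / ρX u > θX (u - s • unitVec i) / ρX (u - s • unitVec i) := by
  set e := unitVec i with he
  set p : ℝ → (Fin n → ℝ) := fun s => u + s • e with hp
  have hp_cont : Continuous p := by
    continuity
  -- small δ so that p s ∈ U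
  have hmem : ∀ᶠ s in nhds (0 : ℝ), p s ∈ U := by
    have : p 0 = u := by simp [hp]
    have h2 := hp_cont.tendsto 0
    rw [this] at h2
    exact h2.eventually_mem (hU_open.mem_nhds hu)
  have hpt : Filter.Tendsto p (nhds 0) (nhdsWithin u U) := by
    rw [tendsto_nhdsWithin_iff]
    have h2 := hp_cont.tendsto 0
    rw [show p 0 = u by simp [hp]] at h2
    exact ⟨h2, hmem⟩
  set g : ℝ → ℝ := fun s => θX (p s) with hg
  set h : ℝ → ℝ := fun s => ρX (p s) with hh
  set A : ℝ → ℝ := fun s => Dθ (p s) i with hA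
  set B : ℝ → ℝ := fun s => Dρ (p s) i with hB
  have hA0 : Filter.Tendsto A (nhds 0) (nhds (Dθ u i)) := hθ_cont.tendsto.comp hpt
  have hB0 : Filter.Tendsto B (nhds 0) (nhds (Dρ u i)) := hρ_cont.tendsto.comp hpt
  have hg0 : Filter.Tendsto g (nhds 0) (nhds (θX u)) := by
    have := (hθ_pd u hu).continuousAt.tendsto
    simpa [hg, hp] using this
  have hh0 : Filter.Tendsto h (nhds 0) (nhds (ρX u)) := by
    have := (hρ_pd u hu).continuousAt.tendsto
    simpa [hh, hp] using this
  set D : ℝ → ℝ := fun s => (A s * h s - g s * B s) / h s ^ 2 with hD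
  have hρu : ρX u ≠ 0 := hρ_ne u hu
  have hD0 : Filter.Tendsto D (nhds 0) (nhds ((Dθ u i * ρX u - θX u * Dρ u i) / ρX u ^ 2)) := by
    exact ((hA0.mul hh0).sub (hg0.mul hB0)).div (hh0.pow 2) (pow_ne_zero 2 hρu)
  have hDpos : (0:ℝ) < (Dθ u i * ρX u - θX u * Dρ u i) / ρX u ^ 2 := by
    apply div_pos (by linarith) (by positivity)
  have hev : ∀ᶠ s in nhds (0:ℝ), 0 < D s := hD0.eventually (eventually_gt_nhds hDpos)
  obtain ⟨ε, hε, hball⟩ := Metric.eventually_nhds_iff_ball.mp (hev.and hmem)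
  -- strict mono on Ioo (-ε) ε
  have hio : ∀ s₀ ∈ Set.Ioo (-ε) ε, p s₀ ∈ U ∧ 0 < D s₀ := by
    intro s₀ hs₀
    have : s₀ ∈ Metric.ball (0:ℝ) ε := by
      simp [Real.ball_eq_Ioo] at *
      constructor <;> [linarith [hs₀.1]; linarith [hs₀.2]]
    exact ⟨(hball s₀ this).2, (hball s₀ this).1⟩
  set φ : ℝ → ℝ := fun s => g s / h s with hφ
  have hderiv : ∀ s₀ ∈ Set.Ioo (-ε) ε, HasDerivAt φ (D s₀) s₀ := by
    intro s₀ hs₀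
    obtain ⟨hmemU, -⟩ := hio s₀ hs₀
    have hgd : HasDerivAt g (A s₀) s₀ := by
      have h1 := hθ_pd (p s₀) hmemU
      have h2 : HasDerivAt (fun s : ℝ => s - s₀) 1 s₀ := (hasDerivAt_id s₀).sub_const s₀
      have h3 := HasDerivAt.comp s₀ (by simpa using h1) h2
      have heq : (fun s : ℝ => θX (p s₀ + (s - s₀) • e)) = g := by
        funext s
        congr 1
        simp only [hp]
        module
      rw [mul_one] at h3
      simpa [Function.comp_def, heq, hA] using h3
    have hhd : HasDerivAt h (B s₀) s₀ := by
      have h1 := hρ_pd (p s₀) hmemU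
      have h2 : HasDerivAt (fun s : ℝ => s - s₀) 1 s₀ := (hasDerivAt_id s₀).sub_const s₀
      have h3 := HasDerivAt.comp s₀ (by simpa using h1) h2
      have heq : (fun s : ℝ => ρX (p s₀ + (s - s₀) • e)) = h := by
        funext s
        congr 1
        simp only [hp]
        module
      rw [mul_one] at h3
      simpa [Function.comp_def, heq, hB] using h3
    exact hgd.div hhd (hρ_ne (p s₀) hmemU)
  have hmono : StrictMonoOn φ (Set.Ioo (-ε) ε) := by
    apply strictMonoOn_of_deriv_pos (convex_Ioo _ _)
    · intro s₀ hs₀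
      exact (hderiv s₀ hs₀).differentiableAt.continuousAt.continuousWithinAt
    · intro s₀ hs₀
      rw [interior_Ioo] at hs₀
      rw [(hderiv s₀ hs₀).deriv]
      exact (hio s₀ hs₀).2
  refine ⟨ε, hε, fun s hs hsε => ?_⟩
  have h0 : (0:ℝ) ∈ Set.Ioo (-ε) ε := by constructor <;> linarith
  have hsmem : s ∈ Set.Ioo (-ε) ε := by constructor <;> linarith
  have hnsmem : -s ∈ Set.Ioo (-ε) ε := by constructor <;> linarith
  have hφ0 : φ 0 = θX u / ρX u := by simp [hφ, hg, hh, hp]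
  have h1 := hmono h0 hsmem hs
  have h2 := hmono hnsmem h0 (by linarith)
  rw [hφ0] at h1 h2
  constructor
  · exact h1
  · have : u + (-s) • e = u - s • e := by module
    simpa [hφ, hg, hh, hp, this, sub_eq_add_neg] using h2


/-- Let `U ⊆ ℝⁿ` be a nonempty open set on which `θ_X` and `ρ_X` are
of the same (nonzero) sign, partially differentiable with partial derivatives
`Dθ`, `Dρ` that are continuous at `u ∈ U`. Then the gradient reward-risk allocation
`t i = ∂θ_X(u)/∂uᵢ`, `k i = ∂ρ_X(u)/∂uᵢ` is suitable for performance measurement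
with `α_X` at `u`. -/
theorem gradient_allocation_suitable_partially_differentiable
    {n : ℕ} (U : Set (Fin n → ℝ)) (hU_open : IsOpen U) (hU_ne : U.Nonempty)
    (θX ρX : (Fin n → ℝ) → ℝ)
    (hsign : ∀ v ∈ U, (0 < θX v ∧ 0 < ρX v) ∨ (θX v < 0 ∧ ρX v < 0))
    (u : Fin n → ℝ) (hu : u ∈ U)
    (Dθ Dρ : (Fin n → ℝ) → Fin n → ℝ)
    (hθ_pd : ∀ v ∈ U, ∀ i : Fin n,
      HasDerivAt (fun s : ℝ => θX (v + s • unitVec i)) (Dθ v i) 0)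
    (hρ_pd : ∀ v ∈ U, ∀ i : Fin n,
      HasDerivAt (fun s : ℝ => ρX (v + s • unitVec i)) (Dρ v i) 0)
    (hθ_cont : ∀ i : Fin n, ContinuousWithinAt (fun v => Dθ v i) U u)
    (hρ_cont : ∀ i : Fin n, ContinuousWithinAt (fun v => Dρ v i) U u) :
    SuitableGradientPM θX ρX U u (Dθ u) (Dρ u) := by
  have hρ_ne : ∀ v ∈ U, ρX v ≠ 0 := fun v hv => by
    rcases hsign v hv with ⟨-, h⟩ | ⟨-, h⟩
    exacts [ne_of_gt h, ne_of_lt h]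
  intro i
  constructor
  · intro hlt
    obtain ⟨ε, hε, hεh⟩ := aux_mono U hU_open θX ρX hρ_ne u hu i Dθ Dρ
      (fun v hv => hθ_pd v hv i) (fun v hv => hρ_pd v hv i)
      (hθ_cont i) (hρ_cont i) hlt
    exact ⟨ε, hε, fun s hs hsε _ _ => hεh s hs hsε⟩
  · intro hlt
    obtain ⟨ε, hε, hεh⟩ := aux_mono U hU_open (fun v => -θX v) ρX hρ_ne u hu i
      (fun v j => -(Dθ v j)) Dρ
      (fun v hv => (hθ_pd v hv i).neg) (fun v hv => hρ_pd v hv i)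
      ((hθ_cont i).neg) (hρ_cont i) (by nlinarith)
    refine ⟨ε, hε, fun s hs hsε _ _ => ?_⟩
    obtain ⟨h1, h2⟩ := hεh s hs hsε
    rw [neg_div, neg_div, gt_iff_lt, neg_lt_neg_iff] at h1
    rw [neg_div, neg_div, gt_iff_lt, neg_lt_neg_iff] at h2
    exact ⟨h2, h1⟩
end

section
/- Let ∅ ≠ U ⊆ ℝ^n be an open set and ρ_X : U → ℝ a function that is partially differentiable at u ∈ U with continuous partial derivatives and such that ρ_X(u) ≠ 0 for all u ∈ U. Let k = (k_1,…,k_n) : U → ℝ^n be continuous at u. Suppose that for every function θ_X : U → ℝ that is partially differentiable at u with continuous partial derivatives and satisfies the sign condition (for every v ∈ U, either θ_X(v) > 0 and ρ_X(v) > 0, or θ_X(v) < 0 and ρ_X(v) < 0), the pair (t,k) with t_i(u) = ∂θ_X(u)/∂u_i is suitable for performance measurement with α_X at u. Then k_i(u) = ∂ρ_X(u)/∂u_i for every i ∈ {1,…,n}. -/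
/-- **uniqueness of the gradient allocation.** Let `U ⊆ ℝⁿ` be a
nonempty open set, `ρ_X : U → ℝ` nowhere zero on `U` and partially differentiable
with partial derivatives `Dρ` continuous at `u ∈ U`, and let `k : U → ℝⁿ` be
continuous at `u`. If for every `θ_X` that is partially differentiable (with partial
derivatives `Dθ` continuous at `u`) and has the same nonzero sign as `ρ_X` on `U`,
the pair `(Dθ u, k u)` is suitable for performance measurement with `α_X` at `u`,
then `k u` is the gradient risk capital allocation: `k u = Dρ u`. -/
theorem gradient_allocation_unique
    {n : ℕ} (U : Set (Fin n → ℝ)) (hU_open : IsOpen U) (hU_ne : U.Nonempty)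
    (ρX : (Fin n → ℝ) → ℝ)
    (hρ_ne : ∀ v ∈ U, ρX v ≠ 0)
    (u : Fin n → ℝ) (hu : u ∈ U)
    (Dρ : (Fin n → ℝ) → Fin n → ℝ)
    (hρ_pd : ∀ v ∈ U, ∀ i : Fin n,
      HasDerivAt (fun s : ℝ => ρX (v + s • unitVec i)) (Dρ v i) 0)
    (hρ_cont : ∀ i : Fin n, ContinuousWithinAt (fun v => Dρ v i) U u)
    (k : (Fin n → ℝ) → Fin n → ℝ)
    (hk_cont : ∀ i : Fin n, ContinuousWithinAt (fun v => k v i) U u)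
    (hsuit : ∀ (θX : (Fin n → ℝ) → ℝ) (Dθ : (Fin n → ℝ) → Fin n → ℝ),
      (∀ v ∈ U, ∀ i : Fin n,
        HasDerivAt (fun s : ℝ => θX (v + s • unitVec i)) (Dθ v i) 0) →
      (∀ i : Fin n, ContinuousWithinAt (fun v => Dθ v i) U u) →
      (∀ v ∈ U, (0 < θX v ∧ 0 < ρX v) ∨ (θX v < 0 ∧ ρX v < 0)) →
      SuitableGradientPM θX ρX U u (Dθ u) (k u)) :
    k u = Dρ u := by
  have sign : ∀ v ∈ U, (0 < ρX v ∧ 0 < ρX v) ∨ (ρX v < 0 ∧ ρX v < 0) := fun v hv =>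
    (hρ_ne v hv).lt_or_gt.elim (fun h => Or.inr ⟨h, h⟩) (fun h => Or.inl ⟨h, h⟩)
  have hs := hsuit ρX Dρ hρ_pd hρ_cont sign
  funext i
  have hnorm : ‖unitVec i‖ ≤ 1 := by
    apply (pi_norm_le_iff_of_nonneg zero_le_one).mpr
    intro j
    by_cases h : j = i <;> simp [unitVec, Pi.single_apply, h]
  have key : ∀ ε > (0 : ℝ), ∃ s : ℝ, 0 < s ∧ s < ε ∧
      u + s • unitVec i ∈ U ∧ u - s • unitVec i ∈ U := by
    intro ε hε
    obtain ⟨δ, hδ, hball⟩ := Metric.isOpen_iff.mp hU_open u hu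
    set s : ℝ := min (ε / 2) (δ / 2) with hsdef
    have hs0 : 0 < s := lt_min (by linarith) (by linarith)
    have hsδ : s < δ := (min_le_right _ _).trans_lt (by linarith)
    have hns : ‖s • unitVec i‖ < δ := by
      rw [norm_smul]
      calc ‖s‖ * ‖unitVec i‖ ≤ ‖s‖ * 1 := mul_le_mul_of_nonneg_left hnorm (norm_nonneg _)
        _ = |s| := mul_one _
        _ = s := abs_of_pos hs0
        _ < δ := hsδ
    refine ⟨s, hs0, (min_le_left _ _).trans_lt (by linarith), ?_, ?_⟩
    · exact hball (by rwa [Metric.mem_ball, dist_eq_norm, add_sub_cancel_left])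
    · exact hball (by rwa [Metric.mem_ball, dist_eq_norm, sub_sub_cancel_left, norm_neg])
  have heq : ρX u * k u i = Dρ u i * ρX u := by
    rcases lt_trichotomy (ρX u * k u i) (Dρ u i * ρX u) with h | h | h
    · obtain ⟨ε, hε, hmono⟩ := (hs i).1 h
      obtain ⟨s, hs0, hsε, hmemp, hmemm⟩ := key ε hε
      have h1 := (hmono s hs0 hsε hmemp hmemm).1
      rw [div_self (hρ_ne _ hmemp), div_self (hρ_ne u hu)] at h1
      exact absurd h1 (lt_irrefl _)
    · exact h
    · obtain ⟨ε, hε, hmono⟩ := (hs i).2 h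
      obtain ⟨s, hs0, hsε, hmemp, hmemm⟩ := key ε hε
      have h1 := (hmono s hs0 hsε hmemp hmemm).1
      rw [div_self (hρ_ne _ hmemm), div_self (hρ_ne u hu)] at h1
      exact absurd h1 (lt_irrefl _)
  exact mul_left_cancel₀ (hρ_ne u hu) (heq.trans (mul_comm _ _))
end
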